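/- In the group S₃^ℤ with presentation ⟨σ₁, σ₂ ∣ σ₁σ₂σ₁ = σ₂σ₁σ₂, σ₁² = σ₂²⟩, the center equals the cyclic subgroup generated by the element σ₁². -/

import Mathlib

/-!
The square `σ₁ ^ 2 = σ₂ ^ 2` commutes with both generators, so `⟨σ₁ ^ 2⟩` is central.
Conversely, right multiplication by a generator or its inverse permutes the six words
`1, σ₁, σ₂, σ₁σ₂, σ₂σ₁, σ₁σ₂σ₁` up to powers of `σ₁ ^ 2`, so they meet every coset of `⟨σ₁ ^ 2⟩`.
The map `σ₁ ↦ (0 1)`, `σ₂ ↦ (1 2)` onto `S₃` separates these words, so its kernel is `⟨σ₁ ^ 2⟩`.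
A central element maps to a permutation commuting with `(0 1)` and `(1 2)`, i.e. to `1`.
-/

/-- Relators of the group `S₃^ℤ`: `σ₁σ₂σ₁σ₂⁻¹σ₁⁻¹σ₂⁻¹` and `σ₁²σ₂⁻²`. -/
def S3ZRels : Set (FreeGroup (Fin 2)) :=
  { FreeGroup.of 0 * FreeGroup.of 1 * FreeGroup.of 0 *
      (FreeGroup.of 1)⁻¹ * (FreeGroup.of 0)⁻¹ * (FreeGroup.of 1)⁻¹,
    FreeGroup.of 0 ^ 2 * (FreeGroup.of 1 ^ 2)⁻¹ }

theorem Subgroup.exists_mul_inv_mem_of_closure_eq_top {G : Type*} [Group G] (H : Subgroup G)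
    {S R : Set G} (hS : closure S = ⊤) (hR : 1 ∈ R)
    (hmul : ∀ s ∈ S, ∀ r ∈ R, ∃ r' ∈ R, r * s * r'⁻¹ ∈ H)
    (hinv : ∀ s ∈ S, ∀ r ∈ R, ∃ r' ∈ R, r * s⁻¹ * r'⁻¹ ∈ H) (g : G) :
    ∃ r ∈ R, g * r⁻¹ ∈ H := by
  have hg : g ∈ closure S := hS ▸ mem_top g
  induction hg using closure_induction_right with
  | one => exact ⟨1, hR, by simp⟩
  | mul_right g _ s hs ih =>
    obtain ⟨r, hr, hgr⟩ := ih
    obtain ⟨r', hr', hrr'⟩ := hmul s hs r hr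
    exact ⟨r', hr', by simpa [mul_assoc] using H.mul_mem hgr hrr'⟩
  | mul_inv_cancel g _ s hs ih =>
    obtain ⟨r, hr, hgr⟩ := ih
    obtain ⟨r', hr', hrr'⟩ := hinv s hs r hr
    exact ⟨r', hr', by simpa [mul_assoc] using H.mul_mem hgr hrr'⟩

theorem Equiv.Perm.eq_one_of_commute_swap_zero_one_of_commute_swap_one_two (p : Perm (Fin 3))
    (h₀₁ : Commute (swap 0 1) p) (h₁₂ : Commute (swap 1 2) p) : p = 1 := by
  simp only [commute_iff_eq] at h₀₁ h₁₂
  revert p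
  decide

namespace S3Z

open Subgroup

abbrev G := PresentedGroup S3ZRels
abbrev σ₁ : G := .of 0
abbrev σ₂ : G := .of 1

theorem braid : σ₁ * σ₂ * σ₁ = σ₂ * σ₁ * σ₂ := by
  have h : σ₁ * σ₂ * σ₁ * σ₂⁻¹ * σ₁⁻¹ * σ₂⁻¹ = 1 := PresentedGroup.one_of_mem (Or.inl rfl)
  rw [← mul_inv_eq_one, ← h]
  group

theorem sq_eq_sq : σ₁ ^ 2 = σ₂ ^ 2 :=
  mul_inv_eq_one.mp (PresentedGroup.one_of_mem (Or.inr rfl))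

theorem sq_mem_center : σ₁ ^ 2 ∈ center G := by
  rw [center_eq_iInf (PresentedGroup.closure_range_of S3ZRels)]
  simp only [mem_iInf, Set.forall_mem_range, mem_centralizer_singleton_iff]
  intro j
  fin_cases j
  · exact Commute.pow_self σ₁ 2
  · exact sq_eq_sq ▸ Commute.pow_self σ₂ 2

theorem sq_mul_comm (g : G) : σ₁ ^ 2 * g = g * σ₁ ^ 2 :=
  (mem_center_iff.mp sq_mem_center g).symm

def reps : Set G := {1, σ₁, σ₂, σ₁ * σ₂, σ₂ * σ₁, σ₁ * σ₂ * σ₁}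

theorem mul_inv_mem_zpowers_of_eq {x y : G} (h : x = σ₁ ^ 2 * y) :
    x * y⁻¹ ∈ zpowers (σ₁ ^ 2) := by
  rw [h, mul_inv_cancel_right]
  exact mem_zpowers _

theorem reps_mul_σ₁ : ∀ r ∈ reps, ∃ r' ∈ reps, r * σ₁ * r'⁻¹ ∈ zpowers (σ₁ ^ 2) := by
  rintro r (rfl | rfl | rfl | rfl | rfl | rfl)
  · exact ⟨σ₁, by simp [reps], by simp⟩
  · exact ⟨1, by simp [reps], mul_inv_mem_zpowers_of_eq (by rw [mul_one, sq])⟩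
  · exact ⟨σ₂ * σ₁, by simp [reps], by simp⟩
  · exact ⟨σ₁ * σ₂ * σ₁, by simp [reps], by simp⟩
  · exact ⟨σ₂, by simp [reps], mul_inv_mem_zpowers_of_eq (by rw [sq_mul_comm, mul_assoc, sq])⟩
  · exact ⟨σ₁ * σ₂, by simp [reps],
      mul_inv_mem_zpowers_of_eq (by rw [sq_mul_comm, mul_assoc, sq])⟩

theorem reps_mul_σ₂ : ∀ r ∈ reps, ∃ r' ∈ reps, r * σ₂ * r'⁻¹ ∈ zpowers (σ₁ ^ 2) := by
  rintro r (rfl | rfl | rfl | rfl | rfl | rfl)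
  · exact ⟨σ₂, by simp [reps], by simp⟩
  · exact ⟨σ₁ * σ₂, by simp [reps], by simp⟩
  · exact ⟨1, by simp [reps], mul_inv_mem_zpowers_of_eq (by rw [mul_one, sq_eq_sq, sq])⟩
  · exact ⟨σ₁, by simp [reps],
      mul_inv_mem_zpowers_of_eq (by rw [sq_mul_comm, sq_eq_sq, mul_assoc, sq])⟩
  · exact ⟨σ₁ * σ₂ * σ₁, by simp [reps], by simp [braid]⟩
  · exact ⟨σ₂ * σ₁, by simp [reps],
      mul_inv_mem_zpowers_of_eq (by rw [sq_mul_comm, braid, sq_eq_sq, mul_assoc, sq])⟩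

theorem reps_mul_inv {s : G} (hs : s * s = σ₁ ^ 2)
    (h : ∀ r ∈ reps, ∃ r' ∈ reps, r * s * r'⁻¹ ∈ zpowers (σ₁ ^ 2)) :
    ∀ r ∈ reps, ∃ r' ∈ reps, r * s⁻¹ * r'⁻¹ ∈ zpowers (σ₁ ^ 2) := by
  intro r hr
  obtain ⟨r', hr', hrr'⟩ := h r hr
  refine ⟨r', hr', ?_⟩
  have key : r * s⁻¹ * r'⁻¹ = (σ₁ ^ 2)⁻¹ * (r * s * r'⁻¹) :=
    calc r * s⁻¹ * r'⁻¹ = r * (σ₁ ^ 2)⁻¹ * s * r'⁻¹ := by rw [← hs]; group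
      _ = (σ₁ ^ 2)⁻¹ * (r * s * r'⁻¹) := by
        rw [mem_center_iff.mp (inv_mem sq_mem_center) r]; group
  rw [key]
  exact mul_mem (inv_mem (mem_zpowers _)) hrr'

theorem exists_mem_reps_mul_inv_mem (g : G) : ∃ r ∈ reps, g * r⁻¹ ∈ zpowers (σ₁ ^ 2) := by
  refine (zpowers _).exists_mul_inv_mem_of_closure_eq_top (PresentedGroup.closure_range_of _)
    (by simp [reps]) (Set.forall_mem_range.mpr fun j => ?_) (Set.forall_mem_range.mpr fun j => ?_) g
  · fin_cases j
    exacts [reps_mul_σ₁, reps_mul_σ₂]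
  · fin_cases j
    exacts [reps_mul_inv (sq σ₁).symm reps_mul_σ₁,
      reps_mul_inv (sq_eq_sq ▸ sq σ₂).symm reps_mul_σ₂]

open Equiv in
def toPerm : G →* Perm (Fin 3) :=
  PresentedGroup.toGroup (f := ![swap 0 1, swap 1 2]) <| by
    rintro r (rfl | rfl) <;> decide

theorem toPerm_σ₁ : toPerm σ₁ = Equiv.swap 0 1 := PresentedGroup.toGroup.of _
theorem toPerm_σ₂ : toPerm σ₂ = Equiv.swap 1 2 := PresentedGroup.toGroup.of _

theorem eq_one_of_mem_reps_of_toPerm_eq_one {r : G} (hr : r ∈ reps) (h : toPerm r = 1) :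
    r = 1 := by
  rcases hr with rfl | rfl | rfl | rfl | rfl | rfl
  · rfl
  all_goals
    simp only [map_mul, toPerm_σ₁, toPerm_σ₂] at h
    exact absurd h (by decide)

theorem zpowers_le_ker_toPerm : zpowers (σ₁ ^ 2) ≤ toPerm.ker := by
  rw [zpowers_le, MonoidHom.mem_ker, map_pow, toPerm_σ₁]
  decide

theorem ker_toPerm : toPerm.ker = zpowers (σ₁ ^ 2) := by
  refine le_antisymm (fun g hg => ?_) zpowers_le_ker_toPerm
  obtain ⟨r, hr, hgr⟩ := exists_mem_reps_mul_inv_mem g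
  have hr1 : toPerm r = 1 := by
    simpa [MonoidHom.mem_ker.mp hg] using zpowers_le_ker_toPerm hgr
  simpa [eq_one_of_mem_reps_of_toPerm_eq_one hr hr1] using hgr

end S3Z

theorem stmt_9 :
    Subgroup.center (PresentedGroup S3ZRels) =
      Subgroup.zpowers ((PresentedGroup.of 0 : PresentedGroup S3ZRels) ^ 2) := by
  open S3Z Subgroup in
  refine le_antisymm (fun g hg => ?_) (zpowers_le.mpr sq_mem_center)
  have toPerm_commute (x : G) : Commute (toPerm x) (toPerm g) :=
    Commute.map (mem_center_iff.mp hg x) toPerm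
  rw [← ker_toPerm, MonoidHom.mem_ker]
  exact Equiv.Perm.eq_one_of_commute_swap_zero_one_of_commute_swap_one_two _
    (toPerm_σ₁ ▸ toPerm_commute σ₁) (toPerm_σ₂ ▸ toPerm_commute σ₂)
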